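/- For every δ > 0 there exists c(δ) such that the following holds. Let G = (V1, V2, E) be a bipartite graph and let (x₁,y₁) and (x₂,y₂) be two ordered pairs of vertices of V1 with d(x₁) ≥ d(y₁), such that |(N(x₁)\N(y₁)) \ N(x₂)| ≥ δ|V2| and |(N(x₁)\N(y₁)) \ N(y₂)| ≥ δ|V2|. If W is a uniformly random subset of V2, then P(d^W(x₁) − d^W(y₁) = d^W(x₂) − d^W(y₂)) ≤ c(δ)·|V2|^{−1/2}. -/

import Mathlib

open Finset

def nbr {V1 V2 : Type} [Fintype V2] (E : V1 → V2 → Prop) [∀ a b, Decidable (E a b)]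
    (u : V1) : Finset V2 := Finset.univ.filter (fun v => E u v)

/-!
Erdős' Littlewood–Offord argument. With `ε = 1_{N(x₁)} - 1_{N(y₁)} - 1_{N(x₂)} + 1_{N(y₂)}`, the
event is `∑_{v ∈ W} ε v = 0`, and `ε ≥ 1` on `A = (N(x₁) \ N(y₁)) \ N(x₂)`. Once `W \ A` is fixed,
no two admissible traces `W ∩ A` are nested, so by Sperner each fibre has at most
`(|A| choose ⌊|A|/2⌋) ≤ 2^|A| / √(|A| + 1)` members. Summing over the `2^(|V₂| - |A|)` fibres and
using `|A| ≥ δ|V₂|` gives `2^|V₂| / √(δ|V₂|)`.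
-/

-- `3k + 1` is chosen so that the induction step `hpoly` holds; with `4k + 1` it fails.
lemma Nat.centralBinom_sq_mul_le (k : ℕ) : k.centralBinom ^ 2 * (3 * k + 1) ≤ 16 ^ k := by
  induction k with
  | zero => simp
  | succ k ih =>
    have hrec := Nat.succ_mul_centralBinom_succ k
    have hpoly : (2 * (2 * k + 1)) ^ 2 * (3 * (k + 1) + 1) ≤ 16 * (k + 1) ^ 2 * (3 * k + 1) := by
      ring_nf; omega
    refine Nat.le_of_mul_le_mul_left (c := (k + 1) ^ 2) ?_ (by positivity)
    calc (k + 1) ^ 2 * ((k + 1).centralBinom ^ 2 * (3 * (k + 1) + 1))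
        = (2 * (2 * k + 1)) ^ 2 * (3 * (k + 1) + 1) * k.centralBinom ^ 2 := by
          rw [← mul_assoc, ← mul_pow, hrec]; ring
      _ ≤ 16 * (k + 1) ^ 2 * (3 * k + 1) * k.centralBinom ^ 2 := by gcongr
      _ = 16 * (k + 1) ^ 2 * (k.centralBinom ^ 2 * (3 * k + 1)) := by ring
      _ ≤ 16 * (k + 1) ^ 2 * 16 ^ k := by gcongr
      _ = (k + 1) ^ 2 * 16 ^ (k + 1) := by ring

lemma Nat.choose_half_sq_mul_le (m : ℕ) : m.choose (m / 2) ^ 2 * (m + 1) ≤ 4 ^ m := by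
  obtain ⟨k, rfl | rfl⟩ := Nat.even_or_odd' m
  · rw [Nat.mul_div_cancel_left k two_pos, ← Nat.centralBinom_eq_two_mul_choose]
    calc k.centralBinom ^ 2 * (2 * k + 1) ≤ k.centralBinom ^ 2 * (3 * k + 1) := by gcongr; omega
      _ ≤ 16 ^ k := k.centralBinom_sq_mul_le
      _ = 4 ^ (2 * k) := by rw [pow_mul]; norm_num
  · have hhalf : (2 * k + 1) / 2 = k := by omega
    have hsucc : (k + 1).centralBinom = 2 * (2 * k + 1).choose k := by
      rw [Nat.centralBinom_eq_two_mul_choose, show 2 * (k + 1) = 2 * k + 1 + 1 by ring,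
        Nat.choose_succ_succ, Nat.choose_symm_half]
      ring
    rw [hhalf]
    refine Nat.le_of_mul_le_mul_left (c := 4) ?_ (by norm_num)
    calc 4 * ((2 * k + 1).choose k ^ 2 * (2 * k + 1 + 1))
        = (k + 1).centralBinom ^ 2 * (2 * k + 2) := by rw [hsucc]; ring
      _ ≤ (k + 1).centralBinom ^ 2 * (3 * (k + 1) + 1) := Nat.mul_le_mul_left _ (by omega)
      _ ≤ 16 ^ (k + 1) := (k + 1).centralBinom_sq_mul_le
      _ = 4 * 4 ^ (2 * k + 1) := by rw [pow_succ, pow_succ, pow_mul]; ring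

namespace Finset

variable {α : Type*}

theorem card_le_choose_half_of_isAntichain {A : Finset α} {𝒜 : Finset (Finset α)}
    (h𝒜A : ∀ s ∈ 𝒜, s ⊆ A) (h𝒜 : IsAntichain (· ⊆ ·) (𝒜 : Set (Finset α))) :
    #𝒜 ≤ (#A).choose (#A / 2) := by
  classical
  let ι : Finset A ↪ Finset α := (mapEmbedding (Function.Embedding.subtype (· ∈ A))).toEmbedding
  let ℬ := 𝒜.preimage ι ι.injective.injOn
  have hℬ : IsAntichain (· ⊆ ·) (ℬ : Set (Finset A)) := by
    rw [coe_preimage]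
    exact h𝒜.preimage ι.injective fun _ _ h => map_subset_map.2 h
  calc #𝒜 ≤ #(ℬ.map ι) := card_le_card fun s hs => mem_map.2
          ⟨s.subtype (· ∈ A), by
            simpa [ℬ, ι, subtype_map, filter_true_of_mem (h𝒜A s hs)] using hs,
            by simp [ι, subtype_map, filter_true_of_mem (h𝒜A s hs)]⟩
    _ = #ℬ := card_map ι
    _ ≤ (#A).choose (#A / 2) := by simpa using hℬ.sperner

theorem subset_of_sdiff_eq_of_inter_subset {s t A : Finset α} [DecidableEq α]
    (hsd : s \ A = t \ A) (hint : s ∩ A ⊆ t ∩ A) : s ⊆ t := by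
  intro x hx
  by_cases hxA : x ∈ A
  · exact (mem_inter.1 (hint (mem_inter.2 ⟨hx, hxA⟩))).1
  · exact (mem_sdiff.1 (hsd ▸ mem_sdiff.2 ⟨hx, hxA⟩)).1

theorem sdiff_subset_of_sdiff_eq {s t A : Finset α} [DecidableEq α] (hsd : s \ A = t \ A) :
    t \ s ⊆ A := by
  intro x hx
  by_contra hxA
  exact (mem_sdiff.1 hx).2 (mem_sdiff.1 (hsd ▸ mem_sdiff.2 ⟨(mem_sdiff.1 hx).1, hxA⟩)).1

theorem card_le_two_pow_mul_choose_half [Fintype α] [DecidableEq α] (A : Finset α)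
    {𝒮 : Finset (Finset α)} (h𝒮 : ∀ W₁ ∈ 𝒮, ∀ W₂ ∈ 𝒮, W₁ ⊆ W₂ → W₂ \ W₁ ⊆ A → W₁ = W₂) :
    #𝒮 ≤ 2 ^ (Fintype.card α - #A) * (#A).choose (#A / 2) := by
  have hfiber (T : Finset α) : #{W ∈ 𝒮 | W \ A = T} ≤ (#A).choose (#A / 2) := by
    set 𝒯 : Finset (Finset α) := {W ∈ 𝒮 | W \ A = T}
    have hsub (W₁ W₂) (hW₁ : W₁ ∈ 𝒯) (hW₂ : W₂ ∈ 𝒯) (hint : W₁ ∩ A ⊆ W₂ ∩ A) :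
        W₁ ⊆ W₂ ∧ W₂ \ W₁ ⊆ A := by
      rw [mem_filter] at hW₁ hW₂
      have hsd : W₁ \ A = W₂ \ A := hW₁.2.trans hW₂.2.symm
      exact ⟨subset_of_sdiff_eq_of_inter_subset hsd hint, sdiff_subset_of_sdiff_eq hsd⟩
    have hanti : IsAntichain (fun W₁ W₂ => W₁ ∩ A ⊆ W₂ ∩ A) (𝒯 : Set (Finset α)) :=
      fun W₁ hW₁ W₂ hW₂ hne hint => hne <| h𝒮 W₁ (mem_filter.1 hW₁).1 W₂ (mem_filter.1 hW₂).1
        (hsub W₁ W₂ hW₁ hW₂ hint).1 (hsub W₁ W₂ hW₁ hW₂ hint).2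
    have hinj : Set.InjOn (· ∩ A) (𝒯 : Set (Finset α)) := fun W₁ hW₁ W₂ hW₂ hint =>
      (hsub W₁ W₂ hW₁ hW₂ hint.le).1.antisymm (hsub W₂ W₁ hW₂ hW₁ hint.ge).1
    rw [← card_image_of_injOn hinj]
    refine card_le_choose_half_of_isAntichain (fun s hs => ?_) ?_
    · obtain ⟨W, -, rfl⟩ := mem_image.1 hs
      exact inter_subset_right
    · rw [coe_image]
      exact hanti.image _ fun _ _ h => h
  calc #𝒮 = ∑ T ∈ (univ \ A).powerset, #{W ∈ 𝒮 | W \ A = T} :=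
        card_eq_sum_card_fiberwise fun W _ =>
          mem_powerset.2 (sdiff_subset_sdiff (subset_univ W) le_rfl)
    _ ≤ ∑ T ∈ (univ \ A).powerset, (#A).choose (#A / 2) := sum_le_sum fun T _ => hfiber T
    _ = 2 ^ (Fintype.card α - #A) * (#A).choose (#A / 2) := by
        rw [sum_const, card_powerset, card_sdiff_of_subset (subset_univ A), card_univ, smul_eq_mul]

theorem eq_of_subset_of_sum_eq {M : Type*} [AddCommMonoid M] [PartialOrder M]
    [IsOrderedCancelAddMonoid M] [DecidableEq α] {ε : α → M} {A W₁ W₂ : Finset α}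
    (hε : ∀ v ∈ A, 0 < ε v) (hW : W₁ ⊆ W₂) (hA : W₂ \ W₁ ⊆ A)
    (hsum : ∑ v ∈ W₁, ε v = ∑ v ∈ W₂, ε v) : W₁ = W₂ := by
  by_contra hne
  have hnonempty : (W₂ \ W₁).Nonempty := sdiff_nonempty.2 fun h => hne (hW.antisymm h)
  have hpos : 0 < ∑ v ∈ W₂ \ W₁, ε v := sum_pos (fun v hv => hε v (hA hv)) hnonempty
  rw [← sum_sdiff hW, right_eq_add] at hsum
  exact hpos.ne' hsum

theorem sq_card_filter_sum_eq_mul_le [Fintype α] [DecidableEq α] {M : Type*} [AddCommMonoid M]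
    [PartialOrder M] [IsOrderedCancelAddMonoid M] [DecidableEq M] (A : Finset α) {ε : α → M}
    (hε : ∀ v ∈ A, 0 < ε v) (s : M) :
    #{W : Finset α | ∑ v ∈ W, ε v = s} ^ 2 * (#A + 1) ≤ 4 ^ Fintype.card α := by
  have hcard := card_le_two_pow_mul_choose_half A (𝒮 := {W : Finset α | ∑ v ∈ W, ε v = s})
    fun W₁ h₁ W₂ h₂ hW hA => eq_of_subset_of_sum_eq hε hW hA <|
      (mem_filter.1 h₁).2.trans (mem_filter.1 h₂).2.symm
  calc #{W : Finset α | ∑ v ∈ W, ε v = s} ^ 2 * (#A + 1)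
      ≤ (2 ^ (Fintype.card α - #A) * (#A).choose (#A / 2)) ^ 2 * (#A + 1) := by gcongr
    _ = 4 ^ (Fintype.card α - #A) * ((#A).choose (#A / 2) ^ 2 * (#A + 1)) := by
        rw [mul_pow, ← pow_mul, mul_comm _ 2, pow_mul]; ring
    _ ≤ 4 ^ (Fintype.card α - #A) * 4 ^ #A := by gcongr; exact Nat.choose_half_sq_mul_le _
    _ = 4 ^ Fintype.card α := by rw [← pow_add, Nat.sub_add_cancel (card_le_univ A)]

theorem natCast_card_inter_eq_sum_ite {R : Type*} [AddCommMonoidWithOne R] [DecidableEq α]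
    (s W : Finset α) : (#(s ∩ W) : R) = ∑ v ∈ W, if v ∈ s then 1 else 0 := by
  rw [sum_boole, filter_mem_eq_inter, inter_comm]

end Finset

lemma le_inv_sqrt_mul_rpow_mul_two_pow {a m n : ℕ} {δ : ℝ} (hδ : 0 < δ) (hn : 0 < n)
    (hm : δ * n ≤ m) (h : a ^ 2 * (m + 1) ≤ 4 ^ n) :
    (a : ℝ) ≤ (√δ)⁻¹ * (n : ℝ) ^ (-(1 : ℝ) / 2) * 2 ^ n := by
  have hδn : 0 < δ * n := by positivity
  have hsq : ((a : ℝ) * √(δ * n)) ^ 2 ≤ (2 ^ n) ^ 2 :=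
    calc ((a : ℝ) * √(δ * n)) ^ 2 = (a : ℝ) ^ 2 * (δ * n) := by
          rw [mul_pow, Real.sq_sqrt hδn.le]
      _ ≤ (a : ℝ) ^ 2 * (m + 1) := by gcongr; linarith
      _ ≤ 4 ^ n := by exact_mod_cast h
      _ = (2 ^ n) ^ 2 := by rw [← pow_mul, mul_comm, pow_mul]; norm_num
  have hle : (a : ℝ) * √(δ * n) ≤ 2 ^ n :=
    (pow_le_pow_iff_left₀ (by positivity) (by positivity) two_ne_zero).1 hsq
  rw [neg_div, Real.rpow_neg (Nat.cast_nonneg n), ← Real.sqrt_eq_rpow, ← mul_inv,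
    ← Real.sqrt_mul hδ.le, inv_mul_eq_div, le_div_iff₀ (by positivity)]
  exact hle

theorem stmt10 (δ : ℝ) (hδ : 0 < δ) :
    ∃ c : ℝ, ∀ (V1 V2 : Type) [Fintype V1] [Fintype V2] [DecidableEq V2] [Nonempty V2]
      (E : V1 → V2 → Prop) [∀ a b, Decidable (E a b)] (x₁ y₁ x₂ y₂ : V1),
      (nbr E y₁).card ≤ (nbr E x₁).card →
      δ * Fintype.card V2 ≤ ((((nbr E x₁ \ nbr E y₁) \ nbr E x₂).card : ℝ)) →
      δ * Fintype.card V2 ≤ ((((nbr E x₁ \ nbr E y₁) \ nbr E y₂).card : ℝ)) →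
      (((Finset.univ : Finset (Finset V2)).filter
          (fun W => ((nbr E x₁ ∩ W).card : ℤ) - (nbr E y₁ ∩ W).card =
                    ((nbr E x₂ ∩ W).card : ℤ) - (nbr E y₂ ∩ W).card)).card : ℝ) ≤
        c * (Fintype.card V2 : ℝ) ^ (-(1 : ℝ) / 2) * 2 ^ (Fintype.card V2) := by
  refine ⟨(√δ)⁻¹, fun V1 V2 _ _ _ _ E _ x₁ y₁ x₂ y₂ _ hA _ => ?_⟩
  set A := (nbr E x₁ \ nbr E y₁) \ nbr E x₂
  let ind (u : V1) (v : V2) : ℤ := if v ∈ nbr E u then 1 else 0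
  have hε : ∀ v ∈ A, 0 < ind x₁ v - ind y₁ v - (ind x₂ v - ind y₂ v) := by
    intro v hv
    simp only [A, mem_sdiff] at hv
    simp only [ind, if_pos hv.1.1, if_neg hv.1.2, if_neg hv.2]
    split_ifs <;> norm_num
  have hcount := sq_card_filter_sum_eq_mul_le A hε 0
  simp only [sum_sub_distrib, sub_eq_zero, ind, ← natCast_card_inter_eq_sum_ite] at hcount
  exact le_inv_sqrt_mul_rpow_mul_two_pow hδ Fintype.card_pos hA hcount
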